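/- arXiv:2005.12079 — 3 statements merged into one kernel-verified Lean document; each statement's English description precedes it below -/
import Mathlib

section
/- For every density matrix ρ on ℂ^{d_A} ⊗ ℂ^{d_B}, the geometric quantum discord equals the CMN-based discord with h=1, p=2: D_G^A(ρ) = M_{1,2}(ρ)² − max_Π M_{1,2}(Π[ρ])², where the maximum is over all projective measurements Π on Alice's subsystem. -/
open Matrix Finset
open scoped Kronecker ComplexOrder

noncomputable section

/-- An orthonormal family of Hermitian matrices with respect to the
Hilbert–Schmidt inner product `⟨X,Y⟩ = tr (X * Y)`. -/
def IsHSOrthonormal {n m : ℕ} (A : Fin m → Matrix (Fin n) (Fin n) ℂ) : Prop :=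
  (∀ i, (A i).IsHermitian) ∧
  ∀ i j, (A i * A j).trace = if i = j then 1 else 0

/-- A density matrix: positive semidefinite with unit trace. -/
def IsDensityMatrix {n : Type*} [Fintype n] [DecidableEq n] (ρ : Matrix n n ℂ) : Prop :=
  ρ.PosSemidef ∧ ρ.trace = 1

/-- The correlation matrix `𝒞_{ij} = tr (ρ (A_i ⊗ B_j))` (a real number since the
operators involved are Hermitian). -/
def corrMat {dA dB : ℕ} (ρ : Matrix (Fin dA × Fin dB) (Fin dA × Fin dB) ℂ)
    (A : Fin (dA ^ 2) → Matrix (Fin dA) (Fin dA) ℂ)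
    (B : Fin (dB ^ 2) → Matrix (Fin dB) (Fin dB) ℂ) :
    Matrix (Fin (dA ^ 2)) (Fin (dB ^ 2)) ℝ :=
  fun i j => (ρ * (A i ⊗ₖ B j)).trace.re

/-- The rectangular "diagonal" matrix with the entries of `σ` on the diagonal. -/
def svdDiag (m n r : ℕ) (σ : Fin r → ℝ) : Matrix (Fin m) (Fin n) ℝ :=
  fun i j => if h : (i : ℕ) = (j : ℕ) ∧ (i : ℕ) < r then σ ⟨(i : ℕ), h.2⟩ else 0

/-- `σ` is the decreasingly sorted vector of singular values of `C`. -/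
def IsSingularValues {m n r : ℕ} (C : Matrix (Fin m) (Fin n) ℝ) (σ : Fin r → ℝ) : Prop :=
  (∀ k, 0 ≤ σ k) ∧ Antitone σ ∧
  ∃ U : Matrix (Fin m) (Fin m) ℝ, ∃ V : Matrix (Fin n) (Fin n) ℝ,
    Uᵀ * U = 1 ∧ Vᵀ * V = 1 ∧ C = U * svdDiag m n r σ * Vᵀ

/-- A separable bipartite state. -/
def SeparableState {dA dB : ℕ} (ρ : Matrix (Fin dA × Fin dB) (Fin dA × Fin dB) ℂ) : Prop :=
  ∃ (n : ℕ) (w : Fin n → ℝ) (O : Fin n → Matrix (Fin dA) (Fin dA) ℂ)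
    (Q : Fin n → Matrix (Fin dB) (Fin dB) ℂ),
    (∀ k, 0 ≤ w k) ∧ (∑ k, w k = 1) ∧
    (∀ k, IsDensityMatrix (O k)) ∧ (∀ k, IsDensityMatrix (Q k)) ∧
    ρ = ∑ k, (w k : ℂ) • (O k ⊗ₖ Q k)

/-- Filter Normal Form: all traceless local observables have vanishing expectation. -/
def IsFNF {dA dB : ℕ} (ρ : Matrix (Fin dA × Fin dB) (Fin dA × Fin dB) ℂ) : Prop :=
  (∀ A : Matrix (Fin dA) (Fin dA) ℂ, A.IsHermitian → A.trace = 0 →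
    (ρ * (A ⊗ₖ (1 : Matrix (Fin dB) (Fin dB) ℂ))).trace = 0) ∧
  (∀ B : Matrix (Fin dB) (Fin dB) ℂ, B.IsHermitian → B.trace = 0 →
    (ρ * ((1 : Matrix (Fin dA) (Fin dA) ℂ) ⊗ₖ B)).trace = 0)

/-- The Correlation Minor Norm with parameters `h`, `p`, expressed in terms of the
singular values `σ`. -/
def CMN {r : ℕ} (σ : Fin r → ℝ) (h : ℕ) (p : ℝ) : ℝ :=
  (∑ R ∈ Finset.univ.powersetCard h, ∏ k ∈ R, σ k ^ p) ^ (1 / p)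

/-- The Correlation Minor Norm with `p = ∞`: the product of the `h` largest singular
values (the singular values being sorted decreasingly). -/
def CMNinf {r : ℕ} (σ : Fin r → ℝ) (h : ℕ) : ℝ :=
  ∏ k ∈ Finset.univ.filter (fun k : Fin r => (k : ℕ) < h), σ k

/-- The `h`-th elementary symmetric polynomial evaluated at `x`. -/
def esym {n : ℕ} (h : ℕ) (x : Fin n → ℝ) : ℝ :=
  ∑ R ∈ Finset.univ.powersetCard h, ∏ k ∈ R, x k

/-- An orthonormal family of vectors in `ℂ^n`. -/
def IsONFamily {n r : ℕ} (v : Fin r → (Fin n → ℂ)) : Prop :=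
  ∀ k l, star (v k) ⬝ᵥ v l = if k = l then 1 else 0

/-- The rank-one projection `|v⟩⟨v|`. -/
def projOf {n : ℕ} (v : Fin n → ℂ) : Matrix (Fin n) (Fin n) ℂ :=
  Matrix.vecMulVec v (star v)

/-- The post-measurement state `Π[ρ] = Σ_l (|l⟩⟨l| ⊗ 𝟙) ρ (|l⟩⟨l| ⊗ 𝟙)` for the
projective measurement on Alice's side given by the orthonormal basis `e`. -/
def measured {dA dB : ℕ} (ρ : Matrix (Fin dA × Fin dB) (Fin dA × Fin dB) ℂ)
    (e : Fin dA → (Fin dA → ℂ)) : Matrix (Fin dA × Fin dB) (Fin dA × Fin dB) ℂ :=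
  ∑ l, (projOf (e l) ⊗ₖ (1 : Matrix (Fin dB) (Fin dB) ℂ)) * ρ *
       (projOf (e l) ⊗ₖ (1 : Matrix (Fin dB) (Fin dB) ℂ))

/-- A regular, coherent, degree-1 quantum design with `r = 1`: a family of rank-one
orthogonal projections summing to `(v/b)·𝟙` whose pairwise overlaps are constant. -/
def IsQDesign {b v : ℕ} (P : Fin v → Matrix (Fin b) (Fin b) ℂ) : Prop :=
  (∀ k, (P k).IsHermitian) ∧ (∀ k, P k * P k = P k) ∧ (∀ k, (P k).trace = 1) ∧
  (∑ k, P k) = ((v : ℂ) / (b : ℂ)) • 1 ∧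
  ∃ μ : ℝ, ∀ k l, k ≠ l → (P k * P l).trace = (μ : ℂ)

/-- A classical-quantum state `χ = Σ_l q_l |l⟩⟨l| ⊗ ρ_l`. -/
def IsCQState {dA dB : ℕ} (χ : Matrix (Fin dA × Fin dB) (Fin dA × Fin dB) ℂ) : Prop :=
  ∃ e : Fin dA → (Fin dA → ℂ), IsONFamily e ∧
  ∃ (q : Fin dA → ℝ) (τ : Fin dA → Matrix (Fin dB) (Fin dB) ℂ),
    (∀ l, 0 ≤ q l) ∧ (∑ l, q l = 1) ∧ (∀ l, IsDensityMatrix (τ l)) ∧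
    χ = ∑ l, (q l : ℂ) • (projOf (e l) ⊗ₖ τ l)

/-- Squared Frobenius norm. -/
def frobSq {n : Type*} [Fintype n] (M : Matrix n n ℂ) : ℝ :=
  ∑ i, ∑ j, Complex.normSq (M i j)

/-- Geometric quantum discord with respect to Alice's subsystem. -/
def geoDiscord {dA dB : ℕ} (ρ : Matrix (Fin dA × Fin dB) (Fin dA × Fin dB) ℂ) : ℝ :=
  sInf {x : ℝ | ∃ χ, IsCQState χ ∧ x = frobSq (ρ - χ)}

/-- The set of values `M_{h,p}(Π[ρ])^p` over all projective measurements `Π` on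
Alice's subsystem. -/
def measuredCMNSet {dA dB : ℕ} (ρ : Matrix (Fin dA × Fin dB) (Fin dA × Fin dB) ℂ)
    (A : Fin (dA ^ 2) → Matrix (Fin dA) (Fin dA) ℂ)
    (B : Fin (dB ^ 2) → Matrix (Fin dB) (Fin dB) ℂ) (h : ℕ) (p : ℝ) : Set ℝ :=
  {x | ∃ e : Fin dA → (Fin dA → ℂ), IsONFamily e ∧
    ∃ σ' : Fin (min dA dB ^ 2) → ℝ,
      IsSingularValues (corrMat (measured ρ e) A B) σ' ∧ x = CMN σ' h p ^ p}

/-- The vector `Σ_k s_k |φ_k⟩⊗|ξ_k⟩` of a Schmidt decomposition. -/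
def pureVec {dA dB r : ℕ} (s : Fin r → ℝ) (φ : Fin r → (Fin dA → ℂ))
    (ξ : Fin r → (Fin dB → ℂ)) : Fin dA × Fin dB → ℂ :=
  fun i => ∑ k, (s k : ℂ) * φ k i.1 * ξ k i.2

/-!
Everything happens in the Hilbert–Schmidt geometry. The products `A_i ⊗ B_j` form an
orthonormal basis of the Hermitian matrices on `ℂ^{d_A} ⊗ ℂ^{d_B}`, so by Parseval
`M_{1,2}(X)² = ‖𝒞(X)‖² = ‖X‖²` for every Hermitian `X`. A projective measurement `Π` on Alice's
side is an orthogonal projection for the Hilbert–Schmidt inner product which fixes every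
classical-quantum state `χ` diagonal in its basis, so by Pythagoras
`‖ρ - χ‖² = ‖ρ - Π[ρ]‖² + ‖Π[ρ] - χ‖² ≥ ‖ρ‖² - ‖Π[ρ]‖²`, with equality for
`χ = Π[ρ]`, which is itself classical-quantum. Minimising over `χ` is therefore maximising
`‖Π[ρ]‖² = M_{1,2}(Π[ρ])²` over `Π`.
-/

lemma csInf_eq_sub_csSup {S T : Set ℝ} {c : ℝ} (hT : T.Nonempty) (hTbdd : BddAbove T)
    (hTS : ∀ t ∈ T, c - t ∈ S) (hST : ∀ s ∈ S, ∃ t ∈ T, c - t ≤ s) :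
    sInf S = c - sSup T := by
  have hlow : ∀ s ∈ S, c - sSup T ≤ s := fun s hs => by
    obtain ⟨t, ht, hts⟩ := hST s hs
    linarith [le_csSup hTbdd ht]
  obtain ⟨t₀, ht₀⟩ := hT
  refine le_antisymm ?_ (le_csInf ⟨_, hTS t₀ ht₀⟩ hlow)
  have : sSup T ≤ c - sInf S :=
    csSup_le ⟨t₀, ht₀⟩ fun t ht => by linarith [csInf_le ⟨_, hlow⟩ (hTS t ht)]
  linarith

section FrobeniusNorm

variable {n : Type*} [Fintype n]

lemma frobSq_eq_re_trace (X : Matrix n n ℂ) : frobSq X = (Xᴴ * X).trace.re := by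
  simp only [frobSq, trace, diag_apply, mul_apply, conjTranspose_apply, Complex.re_sum,
    RCLike.star_def, ← Complex.normSq_eq_conj_mul_self, Complex.ofReal_re]
  exact Finset.sum_comm

lemma frobSq_nonneg (X : Matrix n n ℂ) : 0 ≤ frobSq X :=
  Finset.sum_nonneg fun _ _ => Finset.sum_nonneg fun _ _ => Complex.normSq_nonneg _

lemma re_trace_mul_of_isHermitian {X Y : Matrix n n ℂ} (hX : X.IsHermitian)
    (hY : Y.IsHermitian) : ((X * Y).trace.re : ℂ) = (X * Y).trace := by
  rw [← Complex.conj_eq_iff_re]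
  change star _ = _
  rw [← trace_conjTranspose, conjTranspose_mul, hX.eq, hY.eq, trace_mul_comm]

variable [DecidableEq n] {ι : Type*} [Fintype ι] [DecidableEq ι]

lemma frobSq_eq_sum_sq_re_trace_mul {M : ι → Matrix n n ℂ} (hM : ∀ p, (M p).IsHermitian)
    (hMM : ∀ p q, (M p * M q).trace = if p = q then 1 else 0)
    (hcard : Fintype.card ι = Fintype.card n ^ 2) {X : Matrix n n ℂ} (hX : X.IsHermitian) :
    frobSq X = ∑ p, (X * M p).trace.re ^ 2 := by
  have coeff : ∀ (c : ι → ℂ) q, ((∑ p, c p • M p) * M q).trace = c q := by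
    intro c q
    simp [Finset.sum_mul, trace_sum, hMM]
  have hli : LinearIndependent ℂ M := by
    refine Fintype.linearIndependent_iff.mpr fun c hc q => ?_
    simpa [hc] using (coeff c q).symm
  have hspan := hli.span_eq_top_of_card_eq_finrank'
    (by rw [Module.finrank_matrix, hcard, Module.finrank_self]; ring)
  obtain ⟨c, hcX⟩ := (Submodule.mem_span_range_iff_exists_fun ℂ).mp
    (hspan ▸ Submodule.mem_top : X ∈ Submodule.span ℂ (Set.range M))
  have hc : ∀ p, c p = (X * M p).trace := fun p => by rw [← hcX, coeff]
  have hXX : (X * X).trace = ∑ p, ((X * M p).trace.re : ℂ) ^ 2 := by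
    nth_rewrite 2 [← hcX]
    simp only [Finset.mul_sum, mul_smul_comm, trace_sum, trace_smul, smul_eq_mul, hc,
      re_trace_mul_of_isHermitian hX (hM _), sq]
  rw [frobSq_eq_re_trace, hX.eq, hXX]
  simp only [← Complex.ofReal_pow, ← Complex.ofReal_sum, Complex.ofReal_re]

lemma Matrix.IsHermitian.kronecker {m k : Type*} {P : Matrix m m ℂ} {Q : Matrix k k ℂ}
    (hP : P.IsHermitian) (hQ : Q.IsHermitian) : (P ⊗ₖ Q).IsHermitian := by
  rw [IsHermitian, conjTranspose_kronecker, hP.eq, hQ.eq]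

end FrobeniusNorm

section SingularValueDecomposition

variable {m n r : ℕ}

lemma sum_sq_eq_trace_transpose_mul_self (C : Matrix (Fin m) (Fin n) ℝ) :
    ∑ i, ∑ j, C i j ^ 2 = (Cᵀ * C).trace := by
  simp only [trace, diag_apply, mul_apply, transpose_apply, sq]
  exact Finset.sum_comm

lemma sum_sq_svdDiag (hrm : r ≤ m) (hrn : r ≤ n) (σ : Fin r → ℝ) :
    ∑ i, ∑ j, svdDiag m n r σ i j ^ 2 = ∑ k, σ k ^ 2 := by
  rw [← Fintype.sum_prod_type', eq_comm]
  refine Fintype.sum_of_injective (fun k => (Fin.castLE hrm k, Fin.castLE hrn k))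
    (fun k l h => by simpa [Fin.ext_iff] using congrArg (fun p => (p.1 : ℕ)) h) _ _
    (fun ⟨i, j⟩ hij => ?_) (fun k => by simp [svdDiag])
  simp only [svdDiag, dite_pow, ne_eq, OfNat.ofNat_ne_zero, not_false_eq_true, zero_pow]
  split_ifs with h
  · exact absurd ⟨⟨i, h.2⟩, by simp [Fin.ext_iff, h.1]⟩ hij
  · rfl

lemma IsSingularValues.sum_sq_eq (hrm : r ≤ m) (hrn : r ≤ n) {C : Matrix (Fin m) (Fin n) ℝ}
    {σ : Fin r → ℝ} (hσ : IsSingularValues C σ) : ∑ k, σ k ^ 2 = ∑ i, ∑ j, C i j ^ 2 := by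
  obtain ⟨-, -, U, V, hU, hV, rfl⟩ := hσ
  set D := svdDiag m n r σ
  have hCC : (U * D * Vᵀ)ᵀ * (U * D * Vᵀ) = V * (Dᵀ * D) * Vᵀ := by
    simp only [transpose_mul, transpose_transpose, Matrix.mul_assoc]
    rw [← Matrix.mul_assoc Uᵀ, hU, Matrix.one_mul]
  rw [← sum_sq_svdDiag hrm hrn, sum_sq_eq_trace_transpose_mul_self,
    sum_sq_eq_trace_transpose_mul_self, hCC, trace_mul_cycle, hV, Matrix.one_mul]

lemma exists_orthogonal_antitone_diagonalization {G : Matrix (Fin n) (Fin n) ℝ}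
    (hG : G.IsHermitian) : ∃ (V : Matrix (Fin n) (Fin n) ℝ) (μ : Fin n → ℝ),
      Vᵀ * V = 1 ∧ Antitone μ ∧ Vᵀ * G * V = diagonal μ := by
  have hT := isSymmetric_toEuclideanLin_iff.mpr hG
  have hn : Module.finrank ℝ (EuclideanSpace ℝ (Fin n)) = n := finrank_euclideanSpace_fin
  set b := hT.eigenvectorBasis hn
  set μ := hT.eigenvalues hn
  set V : Matrix (Fin n) (Fin n) ℝ := of fun i k => b k i
  have hVV : Vᵀ * V = 1 := by
    ext k l
    rw [one_apply, ← b.inner_eq_ite, EuclideanSpace.inner_eq_star_dotProduct, dotProduct_comm]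
    simp [V, mul_apply, dotProduct]
  have hGV : G * V = V * diagonal μ := by
    ext i l
    have h : (G *ᵥ b l) i = μ l * b l i :=
      congrFun (congrArg WithLp.ofLp (hT.apply_eigenvectorBasis hn l)) i
    rw [mul_diagonal]
    simpa [V, mul_apply, mulVec, dotProduct, mul_comm] using h
  refine ⟨V, μ, hVV, hT.eigenvalues_antitone hn, ?_⟩
  rw [Matrix.mul_assoc, hGV, ← Matrix.mul_assoc, hVV, Matrix.one_mul]

lemma mul_svdDiag_apply (hnm : n ≤ m) (U : Matrix (Fin m) (Fin m) ℝ) (σ : Fin n → ℝ)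
    (j : Fin m) (k : Fin n) : (U * svdDiag m n n σ) j k = U j (Fin.castLE hnm k) * σ k := by
  rw [mul_apply, Finset.sum_eq_single (Fin.castLE hnm k)]
  · simp [svdDiag]
  · intro i _ hi
    have : (i : ℕ) ≠ k := fun h => hi (Fin.ext h)
    simp [svdDiag, this]
  · simp

lemma exists_orthogonal_eq_mul_svdDiag (hnm : n ≤ m) {W : Matrix (Fin m) (Fin n) ℝ}
    {σ : Fin n → ℝ} (hW : Wᵀ * W = diagonal (fun k => σ k ^ 2)) :
    ∃ U : Matrix (Fin m) (Fin m) ℝ, Uᵀ * U = 1 ∧ W = U * svdDiag m n n σ := by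
  have hWW : ∀ k l, ∑ j, W j k * W j l = if k = l then σ k ^ 2 else 0 := fun k l => by
    simpa [mul_apply, diagonal_apply] using congrFun (congrFun hW k) l
  -- The nonzero columns of `W`, normalised, are orthonormal; `U` extends them to a basis.
  set v : Fin m → EuclideanSpace ℝ (Fin m) := fun i =>
    if h : (i : ℕ) < n then (σ ⟨i, h⟩)⁻¹ • WithLp.toLp 2 (fun j => W j ⟨i, h⟩) else 0
  set s : Set (Fin m) := {i | ∃ h : (i : ℕ) < n, σ ⟨i, h⟩ ≠ 0}
  have hv : Orthonormal ℝ (s.domRestrict v) := by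
    rw [orthonormal_iff_ite]
    rintro ⟨i, hi, hσi⟩ ⟨i', hi', hσi'⟩
    simp only [Set.domRestrict_apply, v, dif_pos hi, dif_pos hi', inner_smul_left,
      inner_smul_right, EuclideanSpace.inner_eq_star_dotProduct]
    simp only [dotProduct, star_trivial, RCLike.conj_to_real, hWW]
    by_cases h : i = i'
    · subst h
      field_simp
      simp
    · have : (⟨i', hi'⟩ : Fin n) ≠ ⟨i, hi⟩ := fun h' => h (Fin.ext (congrArg Fin.val h').symm)
      simp [h, this]
  obtain ⟨b, hb⟩ := hv.exists_orthonormalBasis_extension_of_card_eq (by simp)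
  refine ⟨of fun j i => b i j, ?_, ?_⟩
  · ext i i'
    rw [one_apply, ← b.inner_eq_ite, EuclideanSpace.inner_eq_star_dotProduct, dotProduct_comm]
    simp [mul_apply, dotProduct]
  · ext j k
    rw [mul_svdDiag_apply hnm]
    by_cases hk : σ k = 0
    · have hcol : ∑ j, W j k * W j k = 0 := by rw [hWW, if_pos rfl, hk, sq, zero_mul]
      have := (Finset.sum_eq_zero_iff_of_nonneg fun j _ => mul_self_nonneg (W j k)).mp hcol j
      simp_all
    · have hks : Fin.castLE hnm k ∈ s := ⟨k.2, hk⟩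
      simp only [of_apply, hb _ hks, v, Fin.val_castLE, Fin.is_lt, dif_pos, Fin.eta,
        PiLp.smul_apply, smul_eq_mul]
      field_simp

lemma exists_isSingularValues_of_le (hnm : n ≤ m) (C : Matrix (Fin m) (Fin n) ℝ) :
    ∃ σ : Fin n → ℝ, IsSingularValues C σ := by
  obtain ⟨V, μ, hV, hμ, hVCCV⟩ := exists_orthogonal_antitone_diagonalization
    (by simpa using isHermitian_conjTranspose_mul_self C)
  have hgram : (C * V)ᵀ * (C * V) = diagonal μ := by
    rw [← hVCCV, transpose_mul]
    simp only [Matrix.mul_assoc]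
  have hμ0 : ∀ k, 0 ≤ μ k := fun k => by
    have := congrFun (congrFun hgram k) k
    rw [diagonal_apply_eq, mul_apply] at this
    exact this ▸ Finset.sum_nonneg fun j _ => mul_self_nonneg _
  obtain ⟨U, hU, hCV⟩ := exists_orthogonal_eq_mul_svdDiag hnm (W := C * V)
    (σ := fun k => √(μ k)) (by simp_rw [Real.sq_sqrt (hμ0 _), hgram])
  refine ⟨_, fun k => Real.sqrt_nonneg _, fun a b h => Real.sqrt_le_sqrt (hμ h), U, V, hU, hV, ?_⟩
  rw [← hCV, Matrix.mul_assoc, mul_eq_one_comm.mp hV, Matrix.mul_one]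

lemma svdDiag_transpose (r : ℕ) (σ : Fin r → ℝ) : (svdDiag n m r σ)ᵀ = svdDiag m n r σ := by
  ext i j
  simp only [transpose_apply, svdDiag]
  by_cases h : (i : ℕ) = j
  · simp [h]
  · simp [h, Ne.symm h]

lemma exists_isSingularValues {r : ℕ} (hr : r = min m n) (C : Matrix (Fin m) (Fin n) ℝ) :
    ∃ σ : Fin r → ℝ, IsSingularValues C σ := by
  rcases le_total n m with h | h
  · rw [hr, min_eq_right h]
    exact exists_isSingularValues_of_le h C
  · rw [hr, min_eq_left h]
    obtain ⟨σ, hσ0, hσ, U, V, hU, hV, hC⟩ := exists_isSingularValues_of_le h Cᵀ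
    refine ⟨σ, hσ0, hσ, V, U, hV, hU, ?_⟩
    rw [← transpose_transpose C, hC, transpose_mul, transpose_mul, transpose_transpose,
      svdDiag_transpose, Matrix.mul_assoc]

end SingularValueDecomposition

section Measurement

variable {dA dB : ℕ} {e : Fin dA → Fin dA → ℂ}

lemma projOf_conjTranspose (v : Fin dA → ℂ) : (projOf v)ᴴ = projOf v := by
  ext i j
  simp [projOf, vecMulVec_apply, mul_comm]

lemma IsONFamily.projOf_mul_projOf (he : IsONFamily e) (l l' : Fin dA) :
    projOf (e l) * projOf (e l') = if l = l' then projOf (e l) else 0 := by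
  rw [projOf, projOf, vecMulVec_mul_vecMulVec, he]
  split_ifs with h
  · rw [h, one_smul]
  · ext i j
    simp [vecMulVec_apply]

lemma IsONFamily.trace_projOf (he : IsONFamily e) (l : Fin dA) : (projOf (e l)).trace = 1 := by
  simpa [projOf, trace, vecMulVec_apply, dotProduct, mul_comm] using he l l

lemma IsONFamily.sum_projOf (he : IsONFamily e) : ∑ l, projOf (e l) = 1 := by
  set E : Matrix (Fin dA) (Fin dA) ℂ := of fun a l => e l a
  have hE : Eᴴ * E = 1 := by
    ext l l'
    simpa [E, mul_apply, dotProduct, one_apply] using he l l'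
  rw [← mul_eq_one_comm.mp hE]
  ext a b
  simp [E, mul_apply, projOf, vecMulVec_apply, Matrix.sum_apply]

def localProj (e : Fin dA → Fin dA → ℂ) (l : Fin dA) :
    Matrix (Fin dA × Fin dB) (Fin dA × Fin dB) ℂ :=
  projOf (e l) ⊗ₖ 1

lemma measured_eq_sum_localProj (ρ : Matrix (Fin dA × Fin dB) (Fin dA × Fin dB) ℂ) :
    measured ρ e = ∑ l, localProj e l * ρ * localProj e l :=
  rfl

lemma localProj_conjTranspose (l : Fin dA) : (localProj (dB := dB) e l)ᴴ = localProj e l := by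
  rw [localProj, conjTranspose_kronecker, projOf_conjTranspose, conjTranspose_one]

lemma IsONFamily.localProj_mul_kronecker_mul_localProj (he : IsONFamily e) (l l' : Fin dA)
    (τ : Matrix (Fin dB) (Fin dB) ℂ) :
    localProj e l * (projOf (e l') ⊗ₖ τ) * localProj e l =
      if l = l' then projOf (e l') ⊗ₖ τ else 0 := by
  rw [localProj, ← mul_kronecker_mul, ← mul_kronecker_mul, he.projOf_mul_projOf, Matrix.one_mul,
    Matrix.mul_one]
  split_ifs with h
  · rw [h, he.projOf_mul_projOf, if_pos rfl]
  · rw [Matrix.zero_mul, zero_kronecker]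

lemma IsONFamily.localProj_mul_localProj (he : IsONFamily e) (l l' : Fin dA) :
    localProj (dB := dB) e l * localProj e l' = if l = l' then localProj e l else 0 := by
  rw [localProj, localProj, ← mul_kronecker_mul, he.projOf_mul_projOf, Matrix.one_mul]
  split_ifs
  · rfl
  · rw [zero_kronecker]

lemma IsONFamily.sum_localProj (he : IsONFamily e) : ∑ l, localProj (dB := dB) e l = 1 := by
  rw [← one_kronecker_one, ← he.sum_projOf]
  ext ⟨a, b⟩ ⟨c, d⟩
  simp [localProj, Matrix.sum_apply, Finset.sum_mul]

lemma measured_sub (X Y : Matrix (Fin dA × Fin dB) (Fin dA × Fin dB) ℂ) :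
    measured (X - Y) e = measured X e - measured Y e := by
  simp only [measured_eq_sum_localProj, Matrix.mul_sub, Matrix.sub_mul, Finset.sum_sub_distrib]

lemma IsONFamily.measured_measured (he : IsONFamily e)
    (X : Matrix (Fin dA × Fin dB) (Fin dA × Fin dB) ℂ) :
    measured (measured X e) e = measured X e := by
  have h : ∀ l l', localProj e l * (localProj e l' * X * localProj e l') * localProj e l =
      if l = l' then localProj e l * X * localProj e l else 0 := fun l l' => by
    rw [show localProj e l * (localProj e l' * X * localProj e l') * localProj e l =
        (localProj e l * localProj e l') * X * (localProj e l' * localProj e l) by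
      simp only [Matrix.mul_assoc], he.localProj_mul_localProj, he.localProj_mul_localProj]
    by_cases hl : l = l'
    · simp [hl]
    · simp [hl, Ne.symm hl]
  simp only [measured_eq_sum_localProj, Finset.mul_sum, Finset.sum_mul, h, Finset.sum_ite_eq,
    Finset.mem_univ, if_true]

lemma Matrix.IsHermitian.measured {X : Matrix (Fin dA × Fin dB) (Fin dA × Fin dB) ℂ}
    (hX : X.IsHermitian) : (measured X e).IsHermitian := by
  simp only [IsHermitian, measured_eq_sum_localProj, conjTranspose_sum, conjTranspose_mul,
    localProj_conjTranspose, hX.eq, Matrix.mul_assoc]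

lemma trace_conjTranspose_measured_mul (X Y : Matrix (Fin dA × Fin dB) (Fin dA × Fin dB) ℂ) :
    ((measured X e)ᴴ * Y).trace = (Xᴴ * measured Y e).trace := by
  simp only [measured_eq_sum_localProj, conjTranspose_sum, Finset.sum_mul, Finset.mul_sum,
    trace_sum, conjTranspose_mul, localProj_conjTranspose]
  refine Finset.sum_congr rfl fun l _ => ?_
  simp only [Matrix.mul_assoc]
  rw [trace_mul_comm]
  simp only [Matrix.mul_assoc]

lemma IsONFamily.trace_measured (he : IsONFamily e)
    (X : Matrix (Fin dA × Fin dB) (Fin dA × Fin dB) ℂ) : (measured X e).trace = X.trace := by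
  have h : ∀ l, (localProj e l * X * localProj e l).trace = (localProj e l * X).trace := by
    intro l
    rw [trace_mul_cycle, he.localProj_mul_localProj, if_pos rfl]
  rw [measured_eq_sum_localProj, trace_sum, Finset.sum_congr rfl fun l _ => h l, ← trace_sum,
    ← Finset.sum_mul, he.sum_localProj, Matrix.one_mul]

lemma IsONFamily.measured_sum_smul_kronecker (he : IsONFamily e) (q : Fin dA → ℂ)
    (τ : Fin dA → Matrix (Fin dB) (Fin dB) ℂ) :
    measured (∑ l, q l • (projOf (e l) ⊗ₖ τ l)) e = ∑ l, q l • (projOf (e l) ⊗ₖ τ l) := by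
  simp only [measured_eq_sum_localProj, Finset.mul_sum, Finset.sum_mul, mul_smul_comm,
    smul_mul_assoc, he.localProj_mul_kronecker_mul_localProj]
  rw [Finset.sum_comm]
  simp only [smul_ite, smul_zero, Finset.sum_ite_eq', Finset.mem_univ, if_true]

lemma isONFamily_single (n : ℕ) : IsONFamily (fun l : Fin n => (Pi.single l 1 : Fin n → ℂ)) := by
  intro k l
  simp [dotProduct, Pi.single_apply, apply_ite (starRingEnd ℂ), eq_comm]

end Measurement

section Pythagoras

variable {dA dB : ℕ} {e : Fin dA → Fin dA → ℂ}

lemma frobSq_add_of_measured_eq_zero {X Y : Matrix (Fin dA × Fin dB) (Fin dA × Fin dB) ℂ}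
    (hX : measured X e = 0) (hY : measured Y e = Y) :
    frobSq (X + Y) = frobSq X + frobSq Y := by
  have hXY : (Xᴴ * Y).trace = 0 := by
    rw [← hY, ← trace_conjTranspose_measured_mul, hX, conjTranspose_zero, Matrix.zero_mul,
      trace_zero]
  have hYX : (Yᴴ * X).trace = 0 := by
    rw [← conjTranspose_conjTranspose X, ← conjTranspose_mul, trace_conjTranspose, hXY,
      star_zero]
  simp only [frobSq_eq_re_trace, conjTranspose_add, Matrix.add_mul, Matrix.mul_add, trace_add,
    hXY, hYX, Complex.add_re, Complex.zero_re]
  ring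

lemma IsONFamily.frobSq_sub_of_measured_eq (he : IsONFamily e)
    {X Y : Matrix (Fin dA × Fin dB) (Fin dA × Fin dB) ℂ} (hY : measured Y e = Y) :
    frobSq (X - Y) = frobSq (X - measured X e) + frobSq (measured X e - Y) := by
  rw [← frobSq_add_of_measured_eq_zero (e := e), sub_add_sub_cancel]
  · rw [measured_sub, he.measured_measured, sub_self]
  · rw [measured_sub, he.measured_measured, hY]

lemma IsONFamily.frobSq_eq_add_frobSq_measured (he : IsONFamily e)
    (X : Matrix (Fin dA × Fin dB) (Fin dA × Fin dB) ℂ) :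
    frobSq X = frobSq (X - measured X e) + frobSq (measured X e) := by
  simpa using he.frobSq_sub_of_measured_eq (X := X) (Y := 0) (by simp [measured])

end Pythagoras

section ClassicalQuantum

variable {dA dB : ℕ} {e : Fin dA → Fin dA → ℂ}

def vecTensorOne (v : Fin dA → ℂ) : Matrix (Fin dA × Fin dB) (Fin dB) ℂ :=
  of fun p b => v p.1 * (1 : Matrix (Fin dB) (Fin dB) ℂ) p.2 b

lemma vecTensorOne_mul_mul_conjTranspose (v : Fin dA → ℂ) (N : Matrix (Fin dB) (Fin dB) ℂ) :
    vecTensorOne (dB := dB) v * N * (vecTensorOne (dB := dB) v)ᴴ = projOf v ⊗ₖ N := by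
  ext ⟨a, b⟩ ⟨c, d⟩
  simp [vecTensorOne, mul_apply, projOf, vecMulVec_apply, one_apply, apply_ite (starRingEnd ℂ)]
  ring

lemma localProj_mul_mul_localProj (l : Fin dA) (X : Matrix (Fin dA × Fin dB) (Fin dA × Fin dB) ℂ) :
    localProj e l * X * localProj e l =
      projOf (e l) ⊗ₖ ((vecTensorOne (dB := dB) (e l))ᴴ * X * vecTensorOne (dB := dB) (e l)) := by
  have h := vecTensorOne_mul_mul_conjTranspose (dB := dB) (e l) 1
  rw [Matrix.mul_one] at h
  rw [localProj, ← h, ← vecTensorOne_mul_mul_conjTranspose]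
  simp only [Matrix.mul_assoc]

lemma isDensityMatrix_inv_trace_smul {n : Type*} [Fintype n] [DecidableEq n]
    {N : Matrix n n ℂ} (hN : N.PosSemidef) (h : N.trace ≠ 0) :
    IsDensityMatrix (N.trace⁻¹ • N) :=
  ⟨hN.smul (inv_nonneg_of_nonneg hN.trace_nonneg),
    by rw [trace_smul, smul_eq_mul, inv_mul_cancel₀ h]⟩

lemma IsDensityMatrix.isCQState_measured
    {ρ : Matrix (Fin dA × Fin dB) (Fin dA × Fin dB) ℂ} (hρ : IsDensityMatrix ρ)
    (he : IsONFamily e) : IsCQState (measured ρ e) := by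
  set N : Fin dA → Matrix (Fin dB) (Fin dB) ℂ :=
    fun l => (vecTensorOne (dB := dB) (e l))ᴴ * ρ * vecTensorOne (dB := dB) (e l)
  have hN : ∀ l, (N l).PosSemidef := fun l => hρ.1.conjTranspose_mul_mul_same _
  have hq : ∀ l, (N l).trace = ((N l).trace.re : ℂ) := fun l =>
    Complex.eq_re_of_ofReal_le (r := 0) (by rw [Complex.ofReal_zero]; exact (hN l).trace_nonneg)
  have hmeas : measured ρ e = ∑ l, projOf (e l) ⊗ₖ N l :=
    Finset.sum_congr rfl fun l _ => localProj_mul_mul_localProj l ρ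
  have hsum : ∑ l, (N l).trace = 1 := by
    rw [← hρ.2, ← he.trace_measured, hmeas, trace_sum]
    simp only [trace_kronecker, he.trace_projOf, one_mul]
  have hdB : (1 : Matrix (Fin dB) (Fin dB) ℂ).trace ≠ 0 := by
    rw [trace_one, Fintype.card_fin, Nat.cast_ne_zero]
    rintro rfl
    simpa [trace] using hρ.2
  -- A block of weight zero may carry any state; we take the maximally mixed one.
  refine ⟨e, he, fun l => (N l).trace.re,
    fun l => if N l = 0 then (1 : Matrix (Fin dB) (Fin dB) ℂ).trace⁻¹ • 1 else (N l).trace⁻¹ • N l,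
    fun l => (Complex.nonneg_iff.mp (hN l).trace_nonneg).1, ?_, fun l => ?_, ?_⟩
  · have h : ((∑ l, (N l).trace.re : ℝ) : ℂ) = 1 := by
      rw [Complex.ofReal_sum]
      simpa only [← hq] using hsum
    exact_mod_cast h
  · dsimp only
    split_ifs with h
    · exact isDensityMatrix_inv_trace_smul PosSemidef.one hdB
    · exact isDensityMatrix_inv_trace_smul (hN l) (mt (hN l).trace_eq_zero_iff.mp h)
  · rw [hmeas]
    refine Finset.sum_congr rfl fun l _ => ?_
    dsimp only
    split_ifs with h
    · simp [h]
    · rw [kronecker_smul, smul_smul, ← hq, mul_inv_cancel₀ (mt (hN l).trace_eq_zero_iff.mp h),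
        one_smul]

end ClassicalQuantum

section CorrelationMinorNorm

variable {dA dB : ℕ} {A : Fin (dA ^ 2) → Matrix (Fin dA) (Fin dA) ℂ}
  {B : Fin (dB ^ 2) → Matrix (Fin dB) (Fin dB) ℂ}

lemma CMN_one_two_rpow_two {r : ℕ} (σ : Fin r → ℝ) : CMN σ 1 2 ^ (2 : ℝ) = ∑ k, σ k ^ 2 := by
  simp only [CMN, Finset.powersetCard_one, Finset.sum_map, Function.Embedding.coeFn_mk,
    Finset.prod_singleton, Real.rpow_two]
  rw [← Real.sqrt_eq_rpow, Real.sq_sqrt (by positivity)]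

lemma frobSq_eq_sum_sq_corrMat (hA : IsHSOrthonormal A) (hB : IsHSOrthonormal B)
    {X : Matrix (Fin dA × Fin dB) (Fin dA × Fin dB) ℂ} (hX : X.IsHermitian) :
    frobSq X = ∑ i, ∑ j, corrMat X A B i j ^ 2 := by
  have hAB : ∀ p q : Fin (dA ^ 2) × Fin (dB ^ 2),
      (A p.1 ⊗ₖ B p.2 * (A q.1 ⊗ₖ B q.2)).trace = if p = q then 1 else 0 := fun p q => by
    rw [← mul_kronecker_mul, trace_kronecker, hA.2, hB.2, ite_zero_mul_ite_zero, one_mul]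
    exact if_congr Prod.ext_iff.symm rfl rfl
  have hcard : Fintype.card (Fin (dA ^ 2) × Fin (dB ^ 2)) = Fintype.card (Fin dA × Fin dB) ^ 2 := by
    simp only [Fintype.card_prod, Fintype.card_fin]; ring
  rw [frobSq_eq_sum_sq_re_trace_mul (M := fun p : Fin (dA ^ 2) × Fin (dB ^ 2) => A p.1 ⊗ₖ B p.2)
    (fun p => (hA.1 p.1).kronecker (hB.1 p.2)) hAB hcard hX, Fintype.sum_prod_type]
  rfl

lemma CMN_one_two_rpow_two_eq_frobSq (hA : IsHSOrthonormal A) (hB : IsHSOrthonormal B)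
    {X : Matrix (Fin dA × Fin dB) (Fin dA × Fin dB) ℂ} (hX : X.IsHermitian)
    {σ : Fin (min dA dB ^ 2) → ℝ} (hσ : IsSingularValues (corrMat X A B) σ) :
    CMN σ 1 2 ^ (2 : ℝ) = frobSq X := by
  rw [CMN_one_two_rpow_two, hσ.sum_sq_eq (Nat.pow_le_pow_left (min_le_left _ _) 2)
    (Nat.pow_le_pow_left (min_le_right _ _) 2), frobSq_eq_sum_sq_corrMat hA hB hX]

lemma measuredCMNSet_one_two (hA : IsHSOrthonormal A) (hB : IsHSOrthonormal B)
    {ρ : Matrix (Fin dA × Fin dB) (Fin dA × Fin dB) ℂ} (hρ : ρ.IsHermitian) :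
    measuredCMNSet ρ A B 1 2 = (fun e => frobSq (measured ρ e)) '' {e | IsONFamily e} := by
  ext x
  constructor
  · rintro ⟨e, he, σ, hσ, rfl⟩
    exact ⟨e, he, (CMN_one_two_rpow_two_eq_frobSq hA hB hρ.measured hσ).symm⟩
  · rintro ⟨e, he, rfl⟩
    obtain ⟨σ, hσ⟩ := exists_isSingularValues (pow_left_mono 2).map_min
      (corrMat (measured ρ e) A B)
    exact ⟨e, he, σ, hσ, (CMN_one_two_rpow_two_eq_frobSq hA hB hρ.measured hσ).symm⟩

end CorrelationMinorNorm

theorem geometric_discord_eq_cmn_discord_one_two_general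
    (dA dB : ℕ)
    (A : Fin (dA ^ 2) → Matrix (Fin dA) (Fin dA) ℂ)
    (B : Fin (dB ^ 2) → Matrix (Fin dB) (Fin dB) ℂ)
    (hA : IsHSOrthonormal A) (hB : IsHSOrthonormal B)
    (ρ : Matrix (Fin dA × Fin dB) (Fin dA × Fin dB) ℂ) (hρ : IsDensityMatrix ρ)
    (σ : Fin (min dA dB ^ 2) → ℝ)
    (hσ : IsSingularValues (corrMat ρ A B) σ) :
    geoDiscord ρ = CMN σ 1 2 ^ (2 : ℝ) - sSup (measuredCMNSet ρ A B 1 2) := by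
  have hρH : ρ.IsHermitian := hρ.1.isHermitian
  rw [CMN_one_two_rpow_two_eq_frobSq hA hB hρH hσ, measuredCMNSet_one_two hA hB hρH, geoDiscord]
  refine csInf_eq_sub_csSup ⟨_, _, isONFamily_single dA, rfl⟩ ⟨frobSq ρ, ?_⟩ ?_ ?_
  · rintro _ ⟨e, he, rfl⟩
    linarith [he.frobSq_eq_add_frobSq_measured ρ, frobSq_nonneg (ρ - measured ρ e)]
  · rintro _ ⟨e, he, rfl⟩
    exact ⟨_, hρ.isCQState_measured he, by linarith [he.frobSq_eq_add_frobSq_measured ρ]⟩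
  · rintro _ ⟨χ, ⟨e, he, q, τ, -, -, -, rfl⟩, rfl⟩
    refine ⟨_, ⟨e, he, rfl⟩, ?_⟩
    rw [he.frobSq_sub_of_measured_eq (he.measured_sum_smul_kronecker _ _),
      he.frobSq_eq_add_frobSq_measured ρ, add_sub_cancel_right]
    exact le_add_of_nonneg_right (frobSq_nonneg _)

/-- The geometric quantum discord equals the CMN-based discord with
`h = 1`, `p = 2`: `D_G^A(ρ) = M_{1,2}(ρ)² − sup_Π M_{1,2}(Π[ρ])²`. -/
theorem geometric_discord_eq_cmn_discord_one_two
    (dA dB : ℕ) (hdA : 0 < dA) (hdB : 0 < dB)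
    (A : Fin (dA ^ 2) → Matrix (Fin dA) (Fin dA) ℂ)
    (B : Fin (dB ^ 2) → Matrix (Fin dB) (Fin dB) ℂ)
    (hA : IsHSOrthonormal A) (hB : IsHSOrthonormal B)
    (ρ : Matrix (Fin dA × Fin dB) (Fin dA × Fin dB) ℂ) (hρ : IsDensityMatrix ρ)
    (σ : Fin (min dA dB ^ 2) → ℝ)
    (hσ : IsSingularValues (corrMat ρ A B) σ) :
    geoDiscord ρ = CMN σ 1 2 ^ (2 : ℝ) - sSup (measuredCMNSet ρ A B 1 2) :=
  geometric_discord_eq_cmn_discord_one_two_general dA dB A B hA hB ρ hρ σ hσ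
end
end

section
/- Let |ψ⟩ = Σ_{k=1}^d s_k |φ_k⟩⊗|ξ_k⟩ be the Schmidt decomposition of a unit vector in ℂ^{d_A}⊗ℂ^{d_B} and set ρ = |ψ⟩⟨ψ|. Then the operator-Schmidt coefficients of ρ (the singular values of its correlation matrix) are exactly the d² pairwise products {s_k s_l : 1 ≤ k,l ≤ d}, counted with multiplicity (so for k ≠ l the value s_k s_l appears twice). -/
open Matrix Finset
open scoped Kronecker ComplexOrder

noncomputable section

/-!
Expanding the Schmidt decomposition, `ρ = Σ_{k,l} s_k s_l |φ_k⟩⟨φ_l| ⊗ |ξ_k⟩⟨ξ_l|`. The rank-one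
operators `|φ_k⟩⟨φ_l|` are Hilbert–Schmidt orthonormal, so their coordinates in the basis `A` form a
matrix `X` with orthonormal columns, and likewise `Y` for `|ξ_k⟩⟨ξ_l|` in the basis `B`. Thus
`𝒞 = X D Yᵀ` with `D = diag (s_k s_l)`, and `𝒞 𝒞ᵀ = X D² Xᴴ`. By `charpoly_mul_comm'` the
characteristic polynomial of `X D² Xᴴ` is `∏ (X - (s_k s_l)²)` up to a power of `X`, while the
singular value decomposition gives the same polynomial with the roots `σ_i²`. Comparing roots and
taking square roots gives the claim.
-/

theorem Matrix.IsHermitian.ofReal_re_trace_mul {n : Type*} [Fintype n] {P Q : Matrix n n ℂ}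
    (hP : P.IsHermitian) (hQ : Q.IsHermitian) : (((P * Q).trace.re : ℝ) : ℂ) = (P * Q).trace :=
  Complex.conj_eq_iff_re.mp <| by
    rw [← Complex.star_def, ← trace_conjTranspose, conjTranspose_mul, hP.eq, hQ.eq, trace_mul_comm]

theorem trace_conjTranspose_vecMulVec_mul_vecMulVec {n : Type*} [Fintype n] (u v u' v' : n → ℂ) :
    ((vecMulVec u (star v))ᴴ * vecMulVec u' (star v')).trace =
      (star u ⬝ᵥ u') * (star v' ⬝ᵥ v) := by
  simp only [trace, Matrix.diag, mul_apply, conjTranspose_apply, vecMulVec_apply, dotProduct,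
    Finset.sum_mul, Finset.mul_sum, Pi.star_apply, star_mul', star_star]
  exact Finset.sum_congr rfl fun _ _ => Finset.sum_congr rfl fun _ _ => by ring

theorem Matrix.mul_mul_transpose_mul_conjTranspose {R l m n : Type*} [CommSemiring R] [StarRing R]
    [Fintype m] [DecidableEq m] [Fintype n] (X : Matrix l m R) (D : Matrix m m R) {Y : Matrix n m R}
    (hY : Yᴴ * Y = 1) : X * D * Yᵀ * (X * D * Yᵀ)ᴴ = X * (D * Dᴴ) * Xᴴ := by
  have hYt : Yᵀ * Yᵀᴴ = 1 := by
    rw [conjTranspose_transpose_eq_transpose_conjTranspose, ← transpose_mul, hY, transpose_one]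
  simp only [conjTranspose_mul, Matrix.mul_assoc]
  rw [← Matrix.mul_assoc Yᵀ, hYt, Matrix.one_mul]

theorem Matrix.map_ofReal_mul_conjTranspose {m n : Type*} [Fintype n] (C : Matrix m n ℝ) :
    C.map Complex.ofReal * (C.map Complex.ofReal)ᴴ = (C * Cᵀ).map Complex.ofReal := by
  rw [← conjTranspose_map _ fun x => (Complex.conj_ofReal x).symm,
    conjTranspose_eq_transpose_of_trivial]
  exact (Matrix.map_mul (f := Complex.ofRealHom)).symm

open Polynomial in
theorem Matrix.charpoly_mul_diagonal_mul_of_mul_eq_one {R m ι : Type*} [CommRing R]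
    [Fintype m] [DecidableEq m] [Fintype ι] [DecidableEq ι]
    (Y : Matrix m ι R) (Z : Matrix ι m R) (hZY : Z * Y = 1) (e : ι → R) :
    X ^ Fintype.card ι * (Y * diagonal e * Z).charpoly =
      X ^ Fintype.card m * ∏ i, (X - C (e i)) := by
  rw [charpoly_mul_comm', ← Matrix.mul_assoc, hZY, Matrix.one_mul, charpoly_diagonal]

open Polynomial in
theorem Matrix.roots_charpoly_mul_diagonal_mul_of_mul_eq_one {R m ι : Type*} [CommRing R]
    [IsDomain R] [Fintype m] [DecidableEq m] [Fintype ι] [DecidableEq ι]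
    (Y : Matrix m ι R) (Z : Matrix ι m R) (hZY : Z * Y = 1) (e : ι → R) :
    Fintype.card ι • {0} + (Y * diagonal e * Z).charpoly.roots =
      Fintype.card m • {0} + univ.val.map e := by
  have hprod : ∏ i, (X - C (e i)) = ((univ.val.map e).map fun a => X - C a).prod := by
    rw [Multiset.map_map]; rfl
  have h := congrArg roots (charpoly_mul_diagonal_mul_of_mul_eq_one Y Z hZY e)
  have hprod_monic : (∏ i, (X - C (e i))).Monic :=
    monic_prod_of_monic _ _ fun i _ => monic_X_sub_C _
  rwa [roots_mul ((monic_X_pow _).mul (charpoly_monic _)).ne_zero,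
    roots_mul ((monic_X_pow _).mul hprod_monic).ne_zero,
    roots_X_pow, roots_X_pow, hprod, roots_multiset_prod_X_sub_C] at h

theorem Fin.univ_val_map_dite_lt {R : Type*} [Zero R] {r m : ℕ} (hrm : r ≤ m) (f : Fin r → R) :
    univ.val.map (fun i : Fin m => if h : (i : ℕ) < r then f ⟨i, h⟩ else 0) =
      univ.val.map f + (m - r) • {0} := by
  obtain ⟨c, rfl⟩ := Nat.exists_eq_add_of_le hrm
  simp [Fin.univ_val_map, List.ofFn_add, ← Multiset.coe_add, Multiset.nsmul_singleton,
    Multiset.coe_replicate]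

theorem Multiset.map_eq_map_of_map_sq_eq {α β : Type*} {s : Multiset α} {t : Multiset β}
    {f : α → ℝ} {g : β → ℝ} (hf : ∀ a ∈ s, 0 ≤ f a) (hg : ∀ b ∈ t, 0 ≤ g b)
    (h : s.map (fun a => f a ^ 2) = t.map (fun b => g b ^ 2)) : s.map f = t.map g := by
  have := congrArg (Multiset.map Real.sqrt) h
  simp only [Multiset.map_map, Function.comp_def] at this
  rwa [Multiset.map_congr rfl fun a ha => Real.sqrt_sq (hf a ha),
    Multiset.map_congr rfl fun b hb => Real.sqrt_sq (hg b hb)] at this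

theorem svdDiag_mul_transpose {m n r : ℕ} (hrn : r ≤ n) (σ : Fin r → ℝ) :
    svdDiag m n r σ * (svdDiag m n r σ)ᵀ =
      diagonal (fun i : Fin m => if h : (i : ℕ) < r then σ ⟨i, h⟩ ^ 2 else 0) := by
  ext i i'
  simp only [mul_apply, transpose_apply, svdDiag, diagonal_apply]
  by_cases hi : (i : ℕ) < r
  · rw [Finset.sum_eq_single ⟨i, hi.trans_le hrn⟩]
    · by_cases hii : i = i'
      · subst hii; simp [hi, sq]
      · simp [hii, Ne.symm (Fin.val_ne_of_ne hii)]
    · intro j _ hj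
      have hj' : (i : ℕ) ≠ j := fun h => hj (Fin.ext h.symm)
      simp [hj']
    · simp
  · simp [hi]

theorem IsSingularValues.roots_charpoly_mul_transpose {m n r : ℕ}
    {C : Matrix (Fin m) (Fin n) ℝ} {σ : Fin r → ℝ} (hσ : IsSingularValues C σ)
    (hrm : r ≤ m) (hrn : r ≤ n) :
    (C * Cᵀ).charpoly.roots = univ.val.map (fun k => σ k ^ 2) + (m - r) • {0} := by
  obtain ⟨-, -, U, V, hU, hV, rfl⟩ := hσ
  have hCC : U * svdDiag m n r σ * Vᵀ * (U * svdDiag m n r σ * Vᵀ)ᵀ =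
      U * (svdDiag m n r σ * (svdDiag m n r σ)ᵀ) * Uᵀ := by
    simp only [transpose_mul, transpose_transpose, Matrix.mul_assoc]
    rw [← Matrix.mul_assoc Vᵀ V, hV, Matrix.one_mul]
  rw [hCC, svdDiag_mul_transpose hrn, ← Fin.univ_val_map_dite_lt hrm]
  simpa using roots_charpoly_mul_diagonal_mul_of_mul_eq_one U Uᵀ hU _

theorem IsSingularValues.roots_charpoly_map_ofReal {m n r : ℕ}
    {C : Matrix (Fin m) (Fin n) ℝ} {σ : Fin r → ℝ} (hσ : IsSingularValues C σ)
    (hrm : r ≤ m) (hrn : r ≤ n) :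
    ((C * Cᵀ).map Complex.ofReal).charpoly.roots =
      univ.val.map (fun k => ((σ k ^ 2 : ℝ) : ℂ)) + (m - r) • {0} := by
  have hroots := hσ.roots_charpoly_mul_transpose hrm hrn
  change ((C * Cᵀ).map Complex.ofRealHom).charpoly.roots = _
  rw [charpoly_map, ← Polynomial.roots_map_of_injective_of_card_eq_natDegree
    Complex.ofRealHom.injective (by simp [hroots, hrm]), hroots, Multiset.map_add,
    Multiset.map_map, Multiset.map_nsmul, Multiset.map_singleton, map_zero]
  rfl

namespace IsHSOrthonormal

variable {n N : ℕ} {A : Fin N → Matrix (Fin n) (Fin n) ℂ}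

theorem trace_mul_sum_smul (hA : IsHSOrthonormal A) (c : Fin N → ℂ) (j : Fin N) :
    (A j * ∑ i, c i • A i).trace = c j := by
  simp [Matrix.mul_sum, Matrix.trace_sum, hA.2]

theorem linearIndependent (hA : IsHSOrthonormal A) : LinearIndependent ℂ A :=
  Fintype.linearIndependent_iff.mpr fun c hc j => by
    simpa [hc] using (hA.trace_mul_sum_smul c j).symm

theorem sum_trace_mul_smul (hA : IsHSOrthonormal A) (hN : N = n ^ 2)
    (M : Matrix (Fin n) (Fin n) ℂ) : ∑ i, (A i * M).trace • A i = M := by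
  have hspan : Submodule.span ℂ (Set.range A) = ⊤ :=
    hA.linearIndependent.span_eq_top_of_card_eq_finrank' (by simp [hN, sq, Module.finrank_matrix])
  obtain ⟨c, rfl⟩ :=
    (Submodule.mem_span_range_iff_exists_fun ℂ).mp (hspan ▸ Submodule.mem_top (x := M))
  simp only [hA.trace_mul_sum_smul]

theorem sum_star_trace_mul_trace_mul (hA : IsHSOrthonormal A) (hN : N = n ^ 2)
    (M P : Matrix (Fin n) (Fin n) ℂ) :
    ∑ i, star (A i * M).trace * (A i * P).trace = (Mᴴ * P).trace := by
  conv_rhs => rw [← hA.sum_trace_mul_smul hN M]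
  simp [conjTranspose_sum, Matrix.sum_mul, Matrix.trace_sum, (hA.1 _).eq]

end IsHSOrthonormal

def rankOneCoords {n N r : ℕ} (A : Fin N → Matrix (Fin n) (Fin n) ℂ) (φ : Fin r → Fin n → ℂ) :
    Matrix (Fin N) (Fin r × Fin r) ℂ :=
  of fun i kl => (A i * vecMulVec (φ kl.1) (star (φ kl.2))).trace

theorem IsHSOrthonormal.conjTranspose_rankOneCoords_mul_self {n N r : ℕ}
    {A : Fin N → Matrix (Fin n) (Fin n) ℂ} (hA : IsHSOrthonormal A) (hN : N = n ^ 2)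
    {φ : Fin r → Fin n → ℂ} (hφ : IsONFamily φ) :
    (rankOneCoords A φ)ᴴ * rankOneCoords A φ = 1 := by
  ext kl kl'
  simp only [mul_apply, conjTranspose_apply, rankOneCoords, of_apply,
    hA.sum_star_trace_mul_trace_mul hN, trace_conjTranspose_vecMulVec_mul_vecMulVec]
  rw [hφ kl.1 kl'.1, hφ kl'.2 kl.2, one_apply]
  grind

theorem vecMulVec_pureVec {dA dB r : ℕ} (s : Fin r → ℝ) (φ : Fin r → Fin dA → ℂ)
    (ξ : Fin r → Fin dB → ℂ) :
    vecMulVec (pureVec s φ ξ) (star (pureVec s φ ξ)) =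
      ∑ kl : Fin r × Fin r, ((s kl.1 * s kl.2 : ℝ) : ℂ) •
        (vecMulVec (φ kl.1) (star (φ kl.2)) ⊗ₖ vecMulVec (ξ kl.1) (star (ξ kl.2))) := by
  ext ⟨a, b⟩ ⟨a', b'⟩
  simp only [vecMulVec_apply, Pi.star_apply, pureVec, star_sum, star_mul', Complex.star_def,
    Complex.conj_ofReal, Finset.sum_mul_sum, Fintype.sum_prod_type, Matrix.sum_apply,
    Matrix.smul_apply, kroneckerMap_apply, smul_eq_mul]
  push_cast
  exact Finset.sum_congr rfl fun _ _ => Finset.sum_congr rfl fun _ _ => by ring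

theorem corrMat_pure_map_ofReal {dA dB r : ℕ} {A : Fin (dA ^ 2) → Matrix (Fin dA) (Fin dA) ℂ}
    {B : Fin (dB ^ 2) → Matrix (Fin dB) (Fin dB) ℂ} (hA : ∀ i, (A i).IsHermitian)
    (hB : ∀ j, (B j).IsHermitian) (s : Fin r → ℝ) (φ : Fin r → Fin dA → ℂ)
    (ξ : Fin r → Fin dB → ℂ) :
    (corrMat (vecMulVec (pureVec s φ ξ) (star (pureVec s φ ξ))) A B).map Complex.ofReal =
      rankOneCoords A φ * diagonal (fun kl : Fin r × Fin r => ((s kl.1 * s kl.2 : ℝ) : ℂ)) *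
        (rankOneCoords B ξ)ᵀ := by
  have hψ : (vecMulVec (pureVec s φ ξ) (star (pureVec s φ ξ))).IsHermitian := by
    simp [IsHermitian]
  ext i j
  have hAB : (A i ⊗ₖ B j).IsHermitian := by
    simp [IsHermitian, conjTranspose_kronecker, (hA i).eq, (hB j).eq]
  rw [map_apply, corrMat, hψ.ofReal_re_trace_mul hAB, vecMulVec_pureVec, Matrix.sum_mul, trace_sum,
    mul_apply]
  refine Finset.sum_congr rfl fun kl _ => ?_
  rw [Matrix.smul_mul, trace_smul, ← mul_kronecker_mul, trace_kronecker, trace_mul_comm _ (A i),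
    trace_mul_comm _ (B j)]
  simp only [rankOneCoords, mul_diagonal, transpose_apply, of_apply, smul_eq_mul]
  ring

theorem roots_charpoly_corrMat_pure {dA dB r : ℕ} {A : Fin (dA ^ 2) → Matrix (Fin dA) (Fin dA) ℂ}
    {B : Fin (dB ^ 2) → Matrix (Fin dB) (Fin dB) ℂ} (hA : IsHSOrthonormal A)
    (hB : IsHSOrthonormal B) (s : Fin r → ℝ) {φ : Fin r → Fin dA → ℂ} {ξ : Fin r → Fin dB → ℂ}
    (hφ : IsONFamily φ) (hξ : IsONFamily ξ) {ρ : Matrix (Fin dA × Fin dB) (Fin dA × Fin dB) ℂ}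
    (hρ : ρ = vecMulVec (pureVec s φ ξ) (star (pureVec s φ ξ))) :
    r ^ 2 • {0} + ((corrMat ρ A B * (corrMat ρ A B)ᵀ).map Complex.ofReal).charpoly.roots =
      dA ^ 2 • {0} +
        univ.val.map (fun kl : Fin r × Fin r => (((s kl.1 * s kl.2) ^ 2 : ℝ) : ℂ)) := by
  subst hρ
  rw [← map_ofReal_mul_conjTranspose, corrMat_pure_map_ofReal hA.1 hB.1,
    mul_mul_transpose_mul_conjTranspose _ _ (hB.conjTranspose_rankOneCoords_mul_self rfl hξ),
    diagonal_conjTranspose, diagonal_mul_diagonal]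
  simpa [sq] using roots_charpoly_mul_diagonal_mul_of_mul_eq_one _ _
    (hA.conjTranspose_rankOneCoords_mul_self rfl hφ) _

theorem pure_state_operator_schmidt_coefficients_general
    (dA dB : ℕ)
    (s : Fin (min dA dB) → ℝ) (hs : ∀ k, 0 ≤ s k)
    (φ : Fin (min dA dB) → (Fin dA → ℂ)) (ξ : Fin (min dA dB) → (Fin dB → ℂ))
    (hφ : IsONFamily φ) (hξ : IsONFamily ξ)
    (A : Fin (dA ^ 2) → Matrix (Fin dA) (Fin dA) ℂ)
    (B : Fin (dB ^ 2) → Matrix (Fin dB) (Fin dB) ℂ)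
    (hA : IsHSOrthonormal A) (hB : IsHSOrthonormal B)
    (ρ : Matrix (Fin dA × Fin dB) (Fin dA × Fin dB) ℂ)
    (hρdef : ρ = Matrix.vecMulVec (pureVec s φ ξ) (star (pureVec s φ ξ)))
    (σ : Fin (min dA dB ^ 2) → ℝ)
    (hσ : IsSingularValues (corrMat ρ A B) σ) :
    Multiset.map σ Finset.univ.val =
      Multiset.map (fun kl : Fin (min dA dB) × Fin (min dA dB) => s kl.1 * s kl.2)
        Finset.univ.val := by
  have hrA : min dA dB ^ 2 ≤ dA ^ 2 := Nat.pow_le_pow_left (min_le_left _ _) 2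
  have hrB : min dA dB ^ 2 ≤ dB ^ 2 := Nat.pow_le_pow_left (min_le_right _ _) 2
  have hschmidt := roots_charpoly_corrMat_pure hA hB s hφ hξ hρdef
  -- the `r²` zeros of the Schmidt side and the `dA² - r²` zero eigenvalues beyond the `σ_i²`
  -- make `dA²` zeros on both sides
  rw [hσ.roots_charpoly_map_ofReal hrA hrB, add_left_comm, ← add_nsmul, Nat.add_sub_cancel' hrA,
    add_comm (Multiset.map _ _)] at hschmidt
  have hsq : univ.val.map (fun k => σ k ^ 2) =
      univ.val.map (fun kl : Fin (min dA dB) × Fin (min dA dB) => (s kl.1 * s kl.2) ^ 2) :=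
    Multiset.map_injective Complex.ofReal_injective <| by
      simpa only [Multiset.map_map, Function.comp_def] using add_left_cancel hschmidt
  exact Multiset.map_eq_map_of_map_sq_eq (fun k _ => hσ.1 k)
    (fun kl _ => mul_nonneg (hs kl.1) (hs kl.2)) hsq

/-- For a pure state `ρ = |ψ⟩⟨ψ|` with Schmidt decomposition
`|ψ⟩ = Σ_k s_k |φ_k⟩⊗|ξ_k⟩`, the operator-Schmidt coefficients of `ρ` (the singular
values of its correlation matrix) are exactly the `d²` pairwise products `s_k s_l`,
counted with multiplicity. -/
theorem pure_state_operator_schmidt_coefficients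
    (dA dB : ℕ) (hdA : 0 < dA) (hdB : 0 < dB)
    (s : Fin (min dA dB) → ℝ) (hs : ∀ k, 0 ≤ s k) (hnorm : ∑ k, s k ^ 2 = 1)
    (φ : Fin (min dA dB) → (Fin dA → ℂ)) (ξ : Fin (min dA dB) → (Fin dB → ℂ))
    (hφ : IsONFamily φ) (hξ : IsONFamily ξ)
    (A : Fin (dA ^ 2) → Matrix (Fin dA) (Fin dA) ℂ)
    (B : Fin (dB ^ 2) → Matrix (Fin dB) (Fin dB) ℂ)
    (hA : IsHSOrthonormal A) (hB : IsHSOrthonormal B)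
    (ρ : Matrix (Fin dA × Fin dB) (Fin dA × Fin dB) ℂ)
    (hρdef : ρ = Matrix.vecMulVec (pureVec s φ ξ) (star (pureVec s φ ξ)))
    (σ : Fin (min dA dB ^ 2) → ℝ)
    (hσ : IsSingularValues (corrMat ρ A B) σ) :
    Multiset.map σ Finset.univ.val =
      Multiset.map (fun kl : Fin (min dA dB) × Fin (min dA dB) => s kl.1 * s kl.2)
        Finset.univ.val :=
  pure_state_operator_schmidt_coefficients_general dA dB s hs φ ξ hφ hξ A B hA hB ρ hρdef σ hσ

end
end

section
/- Let ρ be a separable state on ℂ^{d_A} ⊗ ℂ^{d_B}, and let 𝒯 be the (d_A²−1)×(d_B²−1) block of the correlation matrix corresponding to the traceless basis elements (i.e., take A_1 = 𝟙/√(d_A), B_1 = 𝟙/√(d_B), and 𝒯_{ij} = 𝒞_{i+1,j+1}). Then the sum of the singular values of 𝒯 (its trace norm) satisfies Σ_k σ_k(𝒯) ≤ √( (D−1)(d−1)/(Dd) ), where D = max{d_A,d_B}, d = min{d_A,d_B}. -/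
open Matrix Finset
open scoped Kronecker ComplexOrder

noncomputable section

/-!
Write `ρ = ∑ₖ wₖ Oₖ ⊗ Qₖ`. Then `𝒯 = ∑ₖ wₖ aₖ bₖᵀ`, where `aₖ`, `bₖ` are the traceless Bloch
vectors of `Oₖ`, `Qₖ`. Bessel's inequality, the fixed coordinate `tr (O 𝟙/√d) = 1/√d` and purity
`tr O² ≤ 1` give `‖aₖ‖² ≤ 1 - 1/d_A` and `‖bₖ‖² ≤ 1 - 1/d_B`. If `𝒯 = U Σ Vᵀ` is a singular value
decomposition, `∑ σ` is the leading-diagonal sum of `Uᵀ 𝒯 V`, which is linear in `𝒯` and, by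
Cauchy–Schwarz, at most `‖a‖ ‖b‖` on a rank-one `a bᵀ`. Hence
`∑ σ ≤ ∑ₖ wₖ ‖aₖ‖ ‖bₖ‖ ≤ √((1 - 1/d_A)(1 - 1/d_B))`.
-/

namespace Matrix

lemma IsHermitian.ofReal_re_trace_mul_s12 {n : Type*} [Fintype n] {X Y : Matrix n n ℂ}
    (hX : X.IsHermitian) (hY : Y.IsHermitian) : ((X * Y).trace.re : ℂ) = (X * Y).trace :=
  Complex.conj_eq_iff_re.mp <| calc
    starRingEnd ℂ (X * Y).trace = (X * Y)ᴴ.trace := (trace_conjTranspose _).symm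
    _ = (X * Y).trace := by rw [conjTranspose_mul, hX.eq, hY.eq, trace_mul_comm]

lemma IsHermitian.re_trace_kronecker_mul_kronecker {m n : Type*} [Fintype m] [Fintype n]
    {O A : Matrix m m ℂ} {Q B : Matrix n n ℂ} (hO : O.IsHermitian) (hA : A.IsHermitian)
    (hQ : Q.IsHermitian) (hB : B.IsHermitian) :
    ((O ⊗ₖ Q) * (A ⊗ₖ B)).trace.re = (O * A).trace.re * (Q * B).trace.re := by
  rw [← mul_kronecker_mul, trace_kronecker, ← hO.ofReal_re_trace_mul_s12 hA,
    ← hQ.ofReal_re_trace_mul_s12 hB, ← Complex.ofReal_mul, Complex.ofReal_re, Complex.ofReal_re,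
    Complex.ofReal_re]

end Matrix

lemma IsDensityMatrix.re_trace_mul_self_le_one {n : Type*} [Fintype n] [DecidableEq n]
    {O : Matrix n n ℂ} (hO : IsDensityMatrix O) : (O * O).trace.re ≤ 1 := by
  obtain ⟨hpsd, htr⟩ := hO
  have hsum : ∑ i, hpsd.1.eigenvalues i = 1 := by
    simpa [htr] using congrArg Complex.re hpsd.1.trace_eq_sum_eigenvalues.symm
  have hsq : (O * O).trace.re = ∑ i, hpsd.1.eigenvalues i ^ 2 := by
    conv_lhs => rw [hpsd.1.spectral_theorem, ← map_mul, Unitary.conjStarAlgAut_apply,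
      trace_mul_cycle, Unitary.coe_star_mul_self, Matrix.one_mul, diagonal_mul_diagonal,
      trace_diagonal]
    simp [sq]
  calc (O * O).trace.re = ∑ i, hpsd.1.eigenvalues i ^ 2 := hsq
    _ ≤ (∑ i, hpsd.1.eigenvalues i) ^ 2 :=
      sum_sq_le_sq_sum_of_nonneg fun i _ => hpsd.eigenvalues_nonneg i
    _ = 1 := by rw [hsum, one_pow]

def blochCoords {n m : ℕ} (A : Fin m → Matrix (Fin n) (Fin n) ℂ)
    (O : Matrix (Fin n) (Fin n) ℂ) : Fin m → ℝ :=
  fun i => (O * A i).trace.re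

def succIdx {m : ℕ} (i : Fin (m - 1)) : Fin m :=
  ⟨i + 1, by omega⟩

lemma add_sum_succIdx {m : ℕ} (hm : 0 < m) (f : Fin m → ℝ) :
    f ⟨0, hm⟩ + ∑ i, f (succIdx i) = ∑ i, f i := by
  obtain ⟨k, rfl⟩ : ∃ k, m = k + 1 := ⟨m - 1, by omega⟩
  exact (Fin.sum_univ_succ f).symm

lemma IsHSOrthonormal.sum_sq_blochCoords_le {n m : ℕ} {A : Fin m → Matrix (Fin n) (Fin n) ℂ}
    (hA : IsHSOrthonormal A) {O : Matrix (Fin n) (Fin n) ℂ} (hO : O.IsHermitian) :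
    ∑ i, blochCoords A O i ^ 2 ≤ (O * O).trace.re := by
  set c := blochCoords A O
  have hc i : (c i : ℂ) = (O * A i).trace := hO.ofReal_re_trace_mul_s12 (hA.1 i)
  set S := ∑ i, (c i : ℂ) • A i
  have htrace_mul_S (X : Matrix (Fin n) (Fin n) ℂ) :
      (X * S).trace = ∑ i, c i * (X * A i).trace := by
    simp only [S, Matrix.mul_sum, trace_sum, mul_smul_comm, trace_smul, smul_eq_mul]
  have hOS : (O * S).trace = ∑ i, (c i : ℂ) ^ 2 := by
    simp only [htrace_mul_S, ← hc, sq]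
  have hSS : (S * S).trace = ∑ i, (c i : ℂ) ^ 2 := by
    simp only [htrace_mul_S, S, Matrix.sum_mul, trace_sum, smul_mul_assoc, trace_smul, hA.2,
      smul_eq_mul, mul_ite, mul_one, mul_zero, sum_ite_eq, mem_univ, if_true, sq]
  have hpos : 0 ≤ ((O - S) * (O - S)).trace.re := by
    have hS : S.IsHermitian :=
      isSelfAdjoint_sum _ fun i _ => (hA.1 i).smul (Complex.conj_ofReal (c i))
    have := (posSemidef_conjTranspose_mul_self (O - S)).trace_nonneg
    rw [(hO.sub hS).eq] at this
    exact (Complex.nonneg_iff.mp this).1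
  have : ((O - S) * (O - S)).trace = (O * O).trace - ∑ i, (c i : ℂ) ^ 2 := by
    rw [Matrix.sub_mul, Matrix.mul_sub, Matrix.mul_sub, trace_sub, trace_sub, trace_sub, hOS,
      trace_mul_comm S O, hOS, hSS]
    ring
  simp only [this, Complex.sub_re, ← Complex.ofReal_pow, ← Complex.ofReal_sum,
    Complex.ofReal_re] at hpos
  linarith

lemma sum_sq_blochCoords_succIdx_le {d : ℕ} (hd : 0 < d)
    {A : Fin (d ^ 2) → Matrix (Fin d) (Fin d) ℂ} (hA : IsHSOrthonormal A)
    (hA0 : A ⟨0, pow_pos hd 2⟩ = ((Real.sqrt d : ℂ))⁻¹ • (1 : Matrix (Fin d) (Fin d) ℂ))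
    {O : Matrix (Fin d) (Fin d) ℂ} (hO : IsDensityMatrix O) :
    ∑ i, blochCoords A O (succIdx i) ^ 2 ≤ 1 - 1 / (d : ℝ) := by
  have h0 : blochCoords A O ⟨0, pow_pos hd 2⟩ ^ 2 = 1 / d := by
    rw [blochCoords, hA0, mul_smul_comm, Matrix.mul_one, trace_smul, hO.2, smul_eq_mul, mul_one,
      ← Complex.ofReal_inv, Complex.ofReal_re, inv_pow, Real.sq_sqrt d.cast_nonneg, one_div]
  have := add_sum_succIdx (pow_pos hd 2) fun i => blochCoords A O i ^ 2
  linarith [hA.sum_sq_blochCoords_le hO.1.1, hO.re_trace_mul_self_le_one]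

lemma corrMat_sum_smul_kronecker {dA dB N : ℕ} {A : Fin (dA ^ 2) → Matrix (Fin dA) (Fin dA) ℂ}
    {B : Fin (dB ^ 2) → Matrix (Fin dB) (Fin dB) ℂ} (hA : ∀ i, (A i).IsHermitian)
    (hB : ∀ j, (B j).IsHermitian) (w : Fin N → ℝ) {O : Fin N → Matrix (Fin dA) (Fin dA) ℂ}
    {Q : Fin N → Matrix (Fin dB) (Fin dB) ℂ} (hO : ∀ k, (O k).IsHermitian)
    (hQ : ∀ k, (Q k).IsHermitian) :
    corrMat (∑ k, (w k : ℂ) • (O k ⊗ₖ Q k)) A B =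
      ∑ k, w k • vecMulVec (blochCoords A (O k)) (blochCoords B (Q k)) := by
  ext i j
  simp only [corrMat, Matrix.sum_mul, trace_sum, Complex.re_sum, smul_mul_assoc, trace_smul,
    smul_eq_mul, Complex.re_ofReal_mul,
    (hO _).re_trace_kronecker_mul_kronecker (hA i) (hQ _) (hB j), Matrix.sum_apply,
    Matrix.smul_apply, vecMulVec_apply, blochCoords]

lemma sum_sq_vecMul_of_mul_transpose_eq_one {ι : Type*} [Fintype ι] [DecidableEq ι]
    {U : Matrix ι ι ℝ} (hU : U * Uᵀ = 1) (x : ι → ℝ) : ∑ i, (x ᵥ* U) i ^ 2 = ∑ i, x i ^ 2 := by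
  simp only [sq]
  change (x ᵥ* U) ⬝ᵥ (x ᵥ* U) = x ⬝ᵥ x
  rw [← dotProduct_mulVec, ← mulVec_transpose, mulVec_mulVec, hU, one_mulVec]

section LeadingDiagonal

variable {m n r : ℕ} (hrm : r ≤ m) (hrn : r ≤ n)

def leadingDiagSum : Matrix (Fin m) (Fin n) ℝ →ₗ[ℝ] ℝ where
  toFun M := ∑ l : Fin r, M (Fin.castLE hrm l) (Fin.castLE hrn l)
  map_add' M N := by simp only [Matrix.add_apply, sum_add_distrib]
  map_smul' c M := by simp only [Matrix.smul_apply, smul_eq_mul, mul_sum, RingHom.id_apply]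

lemma leadingDiagSum_apply (M : Matrix (Fin m) (Fin n) ℝ) :
    leadingDiagSum hrm hrn M = ∑ l : Fin r, M (Fin.castLE hrm l) (Fin.castLE hrn l) :=
  rfl

lemma leadingDiagSum_svdDiag (σ : Fin r → ℝ) :
    leadingDiagSum hrm hrn (svdDiag m n r σ) = ∑ k, σ k :=
  (leadingDiagSum_apply hrm hrn _).trans (sum_congr rfl fun l _ => by simp [svdDiag])

lemma leadingDiagSum_vecMulVec_le (x : Fin m → ℝ) (y : Fin n → ℝ) :
    leadingDiagSum hrm hrn (vecMulVec x y) ≤ √(∑ i, x i ^ 2) * √(∑ j, y j ^ 2) := by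
  have hsub {k : ℕ} (h : r ≤ k) (z : Fin k → ℝ) :
      ∑ l : Fin r, z (Fin.castLE h l) ^ 2 ≤ ∑ i, z i ^ 2 :=
    calc ∑ l : Fin r, z (Fin.castLE h l) ^ 2 = ∑ i ∈ univ.map (Fin.castLEEmb h), z i ^ 2 :=
          (sum_map univ (Fin.castLEEmb h) fun i => z i ^ 2).symm
      _ ≤ _ := sum_le_sum_of_subset_of_nonneg (subset_univ _) fun _ _ _ => sq_nonneg _
  calc leadingDiagSum hrm hrn (vecMulVec x y)
      = ∑ l : Fin r, x (Fin.castLE hrm l) * y (Fin.castLE hrn l) :=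
        leadingDiagSum_apply hrm hrn _
    _ ≤ _ := Real.sum_mul_le_sqrt_mul_sqrt _ _ _
    _ ≤ _ := by gcongr <;> exact hsub _ _

end LeadingDiagonal

theorem IsSingularValues.sum_le_sum_mul_sqrt {m n r N : ℕ} (hrm : r ≤ m) (hrn : r ≤ n)
    {T : Matrix (Fin m) (Fin n) ℝ} {σ : Fin r → ℝ} (hσ : IsSingularValues T σ)
    {w : Fin N → ℝ} (hw : ∀ k, 0 ≤ w k) (a : Fin N → Fin m → ℝ) (b : Fin N → Fin n → ℝ)
    (hT : T = ∑ k, w k • vecMulVec (a k) (b k)) :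
    ∑ k, σ k ≤ ∑ k, w k * (√(∑ i, a k i ^ 2) * √(∑ j, b k j ^ 2)) := by
  obtain ⟨-, -, U, V, hU, hV, hTsvd⟩ := hσ
  have hD : svdDiag m n r σ = Uᵀ * T * V := by
    rw [hTsvd, ← Matrix.mul_assoc, ← Matrix.mul_assoc, hU, Matrix.one_mul, Matrix.mul_assoc, hV,
      Matrix.mul_one]
  calc ∑ k, σ k = leadingDiagSum hrm hrn (Uᵀ * T * V) := by rw [← hD, leadingDiagSum_svdDiag]
    _ = ∑ k, w k * leadingDiagSum hrm hrn (vecMulVec (a k ᵥ* U) (b k ᵥ* V)) := by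
      simp only [hT, Matrix.mul_sum, Matrix.sum_mul, map_sum, Matrix.mul_smul, Matrix.smul_mul,
        map_smul, smul_eq_mul, ← mulVec_transpose, mul_vecMulVec, vecMulVec_mul]
    _ ≤ _ := by
      gcongr with k
      · exact hw k
      · simpa only [sum_sq_vecMul_of_mul_transpose_eq_one (mul_eq_one_comm.mp hU),
          sum_sq_vecMul_of_mul_transpose_eq_one (mul_eq_one_comm.mp hV)]
          using leadingDiagSum_vecMulVec_le hrm hrn (a k ᵥ* U) (b k ᵥ* V)

lemma one_sub_inv_mul_one_sub_inv {a b : ℝ} (ha : a ≠ 0) (hb : b ≠ 0) :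
    (1 - 1 / a) * (1 - 1 / b) = (max a b - 1) * (min a b - 1) / (max a b * min a b) := by
  rcases le_total a b with h | h <;> simp only [h, max_eq_left, max_eq_right, min_eq_left,
    min_eq_right] <;> field_simp

/-- (de Vicente bound.) For a separable state, the trace norm (sum of
singular values) of the traceless block `𝒯` of the correlation matrix — the block
obtained by deleting the row and column corresponding to `A_1 = 𝟙/√d_A`,
`B_1 = 𝟙/√d_B` — is at most `√((D−1)(d−1)/(Dd))`. -/
theorem traceless_block_trace_norm_bound_of_separable
    (dA dB : ℕ) (hdA : 0 < dA) (hdB : 0 < dB)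
    (A : Fin (dA ^ 2) → Matrix (Fin dA) (Fin dA) ℂ)
    (B : Fin (dB ^ 2) → Matrix (Fin dB) (Fin dB) ℂ)
    (hA : IsHSOrthonormal A) (hB : IsHSOrthonormal B)
    (hA0 : A ⟨0, pow_pos hdA 2⟩ = ((Real.sqrt dA : ℂ))⁻¹ • (1 : Matrix (Fin dA) (Fin dA) ℂ))
    (hB0 : B ⟨0, pow_pos hdB 2⟩ = ((Real.sqrt dB : ℂ))⁻¹ • (1 : Matrix (Fin dB) (Fin dB) ℂ))
    (ρ : Matrix (Fin dA × Fin dB) (Fin dA × Fin dB) ℂ)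
    (hsep : SeparableState ρ)
    (T : Matrix (Fin (dA ^ 2 - 1)) (Fin (dB ^ 2 - 1)) ℝ)
    (hT : ∀ i j, T i j =
      corrMat ρ A B ⟨(i : ℕ) + 1, by have := i.isLt; omega⟩
        ⟨(j : ℕ) + 1, by have := j.isLt; omega⟩)
    (τ : Fin (min dA dB ^ 2 - 1) → ℝ)
    (hτ : IsSingularValues T τ) :
    ∑ k, τ k ≤
      Real.sqrt
        ((((max dA dB : ℝ) - 1) * ((min dA dB : ℝ) - 1)) /
          ((max dA dB : ℝ) * (min dA dB : ℝ))) := by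
  obtain ⟨N, w, O, Q, hw0, hw1, hO, hQ, rfl⟩ := hsep
  have hT' : T = ∑ k, w k • vecMulVec (blochCoords A (O k) ∘ succIdx)
      (blochCoords B (Q k) ∘ succIdx) := by
    ext i j
    rw [hT, corrMat_sum_smul_kronecker hA.1 hB.1 w (fun k => (hO k).1.1) fun k => (hQ k).1.1]
    simp only [Matrix.sum_apply, Matrix.smul_apply, vecMulVec_apply, Function.comp_apply]
    rfl
  have hrA : min dA dB ^ 2 - 1 ≤ dA ^ 2 - 1 := by gcongr; exact min_le_left _ _
  have hrB : min dA dB ^ 2 - 1 ≤ dB ^ 2 - 1 := by gcongr; exact min_le_right _ _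
  have hbound_nonneg : 0 ≤ 1 - 1 / (dA : ℝ) := by
    rw [sub_nonneg, div_le_one (by positivity)]
    exact_mod_cast hdA
  calc ∑ k, τ k ≤ ∑ k, w k * (√(1 - 1 / (dA : ℝ)) * √(1 - 1 / (dB : ℝ))) := by
        refine (hτ.sum_le_sum_mul_sqrt hrA hrB hw0 _ _ hT').trans (sum_le_sum fun k _ => ?_)
        gcongr
        · exact hw0 k
        · exact sum_sq_blochCoords_succIdx_le hdA hA hA0 (hO k)
        · exact sum_sq_blochCoords_succIdx_le hdB hB hB0 (hQ k)
    _ = _ := by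
      rw [← sum_mul, hw1, one_mul, ← Real.sqrt_mul hbound_nonneg,
        one_sub_inv_mul_one_sub_inv (by positivity) (by positivity)]
end
end
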